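/- Let A be a complex n×n matrix with all eigenvalues of positive real part, λ₁ the minimum of these real parts, m ≥ 0 an integer, α > 0, and T* > E_m(0). If g : [0, ∞) → ℂⁿ is continuous with |g(t)| ≤ C L_m(T* + t)^{−α} for all t ≥ 0, then |∫₀ᵗ e^{−(t−τ)A} g(τ) dτ| = O(L_m(T* + t)^{−α}) as t → ∞. -/

import Mathlib

/-!
Since `σ(e^{-A}) ⊆ exp (-σ(A))` lies in the open unit disc, Gelfand's formula gives a power
`e^{-kA}` of norm `< 1`, whence `‖e^{-sA}‖ ≤ C₀ e^{-γ s}`. The integral is then bounded by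
`C₀ C ∫₀ᵗ e^{-γ(t-τ)} w(τ) dτ` with `w(τ) = L_m(T* + τ)^{-α}`, which is split at `t / 2`.
On `[0, t/2]` the exponential factor is at most `e^{-γ t/2}`, which is `O(w(t))` because
`L_m(x) ≤ x`; on `[t/2, t]` the weight is at most `w(t/2)`, which is `O(w(t))` because
`L_m(2y) ≤ 2 L_m(y)`.
-/

attribute [local instance] Matrix.linftyOpNormedRing Matrix.linftyOpNormedAlgebra

noncomputable def Lm : ℕ → ℝ → ℝ
  | 0, t => t
  | n + 1, t => Real.log (Lm n t)

noncomputable def Em : ℕ → ℝ → ℝ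
  | 0, t => t
  | n + 1, t => Real.exp (Em n t)

section IteratedLogarithm

open Real

theorem Lm_succ (m : ℕ) (x : ℝ) : Lm (m + 1) x = Lm m (log x) := by
  induction m generalizing x with
  | zero => rfl
  | succ k ih => exact congrArg log (ih x)

theorem Em_strictMono (m : ℕ) : StrictMono (Em m) := by
  induction m with
  | zero => exact strictMono_id
  | succ k ih => exact exp_strictMono.comp ih

theorem Em_zero_nonneg (m : ℕ) : 0 ≤ Em m 0 := by
  cases m with
  | zero => exact le_rfl
  | succ k => exact (exp_pos _).le

theorem two_le_Em_two (m : ℕ) : 2 ≤ Em m 2 := by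
  induction m with
  | zero => exact le_rfl
  | succ k ih => exact ih.trans ((add_one_le_exp _).trans' (by linarith))

theorem Em_lt_log_of_Em_succ_lt {m : ℕ} {c x : ℝ} (h : Em (m + 1) c < x) : Em m c < log x :=
  (lt_log_iff_exp_lt (lt_trans (exp_pos _) h)).2 h

theorem Lm_pos {m : ℕ} {x : ℝ} (hx : Em m 0 < x) : 0 < Lm m x := by
  induction m generalizing x with
  | zero => exact hx
  | succ k ih => exact (Lm_succ k x).symm ▸ ih (Em_lt_log_of_Em_succ_lt hx)

theorem Lm_le_Lm {m : ℕ} {x y : ℝ} (hx : Em m 0 < x) (hxy : x ≤ y) : Lm m x ≤ Lm m y := by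
  induction m generalizing x y with
  | zero => exact hxy
  | succ k ih =>
    rw [Lm_succ, Lm_succ]
    exact ih (Em_lt_log_of_Em_succ_lt hx) (log_le_log ((Em_zero_nonneg _).trans_lt hx) hxy)

theorem Lm_le_self {m : ℕ} {x : ℝ} (hx : Em m 0 < x) : Lm m x ≤ x := by
  induction m generalizing x with
  | zero => exact le_rfl
  | succ k ih =>
    rw [Lm_succ]
    exact (ih (Em_lt_log_of_Em_succ_lt hx)).trans (log_le_self ((Em_zero_nonneg _).trans hx.le))

theorem Lm_two_mul_le {m : ℕ} {y : ℝ} (hy : Em m 2 ≤ y) : Lm m (2 * y) ≤ 2 * Lm m y := by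
  induction m generalizing y with
  | zero => exact le_rfl
  | succ k ih =>
    have hy2 : 2 ≤ y := (two_le_Em_two _).trans hy
    have hlog : Em k 2 ≤ log y := (le_log_iff_exp_le (by linarith)).2 hy
    have hlog2 : log 2 ≤ log y := log_le_log two_pos hy2
    rw [Lm_succ, Lm_succ, log_mul two_ne_zero (by linarith)]
    calc Lm k (log 2 + log y) ≤ Lm k (2 * log y) :=
          Lm_le_Lm ((Em_strictMono k two_pos).trans_le
            (hlog.trans (by linarith [log_pos one_lt_two]))) (by linarith)
      _ ≤ 2 * Lm k (log y) := ih hlog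

end IteratedLogarithm

section IteratedLogarithmWeight

open Real Filter Asymptotics Set

variable {m : ℕ} {α T : ℝ}

theorem antitoneOn_Lm_rpow_neg (hα : 0 ≤ α) (hT : Em m 0 < T) :
    AntitoneOn (fun t => Lm m (T + t) ^ (-α)) (Ici 0) := fun a ha b _ hab =>
  rpow_le_rpow_of_nonpos (Lm_pos (by linarith [mem_Ici.1 ha]))
    (Lm_le_Lm (by linarith [mem_Ici.1 ha]) (by linarith)) (neg_nonpos.2 hα)

theorem isBigO_Lm_rpow_neg_half (hα : 0 ≤ α) (hT : 0 ≤ T) :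
    (fun t => Lm m (T + t / 2) ^ (-α)) =O[atTop] fun t => Lm m (T + t) ^ (-α) := by
  refine IsBigO.of_bound (2 ^ α) ?_
  filter_upwards [eventually_ge_atTop (2 * Em m 2)] with t ht
  have hhalf : Em m 2 ≤ T + t / 2 := by linarith
  have hdom : Em m 0 < T + t / 2 := (Em_strictMono m two_pos).trans_le hhalf
  have hdom' : Em m 0 < T + t := by linarith [two_le_Em_two m]
  have hpos : 0 < Lm m (T + t) := Lm_pos hdom'
  have hdouble : Lm m (T + t) ≤ 2 * Lm m (T + t / 2) :=
    (Lm_le_Lm hdom' (by linarith)).trans (Lm_two_mul_le hhalf)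
  rw [norm_of_nonneg (rpow_nonneg (Lm_pos hdom).le _), norm_of_nonneg (rpow_nonneg hpos.le _)]
  calc Lm m (T + t / 2) ^ (-α) ≤ (Lm m (T + t) / 2) ^ (-α) :=
        rpow_le_rpow_of_nonpos (by positivity) (by linarith) (neg_nonpos.2 hα)
    _ = 2 ^ α * Lm m (T + t) ^ (-α) := by
        rw [div_rpow hpos.le zero_le_two, rpow_neg zero_le_two, div_inv_eq_mul, mul_comm]

theorem isBigO_mul_exp_neg_Lm_rpow_neg (hα : 0 ≤ α) {c : ℝ} (hc : 0 < c) :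
    (fun t => t * exp (-c * t)) =O[atTop] fun t => Lm m (T + t) ^ (-α) := by
  have hpoly : (fun t => t * exp (-c * t)) =O[atTop] fun t => t ^ (-α) := by
    refine IsBigO.of_bound 1 ?_
    filter_upwards [(tendsto_rpow_mul_exp_neg_mul_atTop_nhds_zero (α + 1) c hc).eventually_le_const
      one_pos, eventually_gt_atTop 0] with t ht ht0
    rw [norm_of_nonneg (by positivity), norm_of_nonneg (by positivity), one_mul]
    calc t * exp (-c * t) = t ^ (α + 1) * exp (-c * t) * t ^ (-α) := by
          rw [mul_right_comm, ← rpow_add ht0]; simp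
      _ ≤ t ^ (-α) := mul_le_of_le_one_left (by positivity) ht
  refine hpoly.trans (IsBigO.of_bound (2 ^ α) ?_)
  filter_upwards [eventually_gt_atTop |T|, eventually_gt_atTop (Em m 0 - T)] with t ht hTt
  have hdom : Em m 0 < T + t := by linarith
  have ht0 : 0 < t := (abs_nonneg T).trans_lt ht
  rw [norm_of_nonneg (by positivity), norm_of_nonneg (rpow_nonneg (Lm_pos hdom).le _)]
  calc t ^ (-α) = 2 ^ α * (2 * t) ^ (-α) := by
        rw [mul_rpow zero_le_two ht0.le, rpow_neg zero_le_two, ← mul_assoc,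
          mul_inv_cancel₀ (by positivity), one_mul, rpow_neg ht0.le]
    _ ≤ 2 ^ α * Lm m (T + t) ^ (-α) :=
        mul_le_mul_of_nonneg_left (rpow_le_rpow_of_nonpos (Lm_pos hdom)
          ((Lm_le_self hdom).trans (by linarith [le_abs_self T])) (neg_nonpos.2 hα)) (by positivity)

end IteratedLogarithmWeight

section ConvolutionWithExponential

open Real Filter Asymptotics intervalIntegral MeasureTheory Set

theorem AntitoneOn.intervalIntegrable_exp_mul {w : ℝ → ℝ} {a b γ t : ℝ}
    (hw : AntitoneOn w (uIcc a b)) :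
    IntervalIntegrable (fun τ => exp (-γ * (t - τ)) * w τ) volume a b :=
  hw.intervalIntegrable.continuousOn_mul (by fun_prop)

theorem integral_exp_neg_mul_sub_le {γ : ℝ} (hγ : 0 < γ) (t : ℝ) :
    ∫ τ in (t / 2)..t, exp (-γ * (t - τ)) ≤ γ⁻¹ := by
  have hderiv (τ : ℝ) : HasDerivAt (fun τ => exp (-γ * (t - τ)) / γ) (exp (-γ * (t - τ))) τ := by
    refine ((((hasDerivAt_id τ).const_sub t).const_mul (-γ)).exp.div_const γ).congr_deriv ?_
    field_simp
    rfl
  have hcont : Continuous fun τ => exp (-γ * (t - τ)) := by fun_prop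
  rw [integral_eq_sub_of_hasDerivAt (fun τ _ => hderiv τ) (hcont.intervalIntegrable _ _)]
  simp only [sub_self, mul_zero, exp_zero, one_div]
  linarith [div_pos (exp_pos (-γ * (t - t / 2))) hγ]

theorem integral_exp_neg_mul_le {w : ℝ → ℝ} {γ t : ℝ} (hγ : 0 < γ) (ht : 0 ≤ t)
    (hw : AntitoneOn w (Icc 0 t)) (hwt : 0 ≤ w t) :
    ∫ τ in 0..t, exp (-γ * (t - τ)) * w τ
      ≤ t / 2 * exp (-(γ / 2) * t) * w 0 + γ⁻¹ * w (t / 2) := by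
  have hw0 : ∀ τ ∈ Icc 0 t, 0 ≤ w τ := fun τ hτ => hwt.trans (hw hτ ⟨ht, le_rfl⟩ hτ.2)
  have hint {a b : ℝ} (ha : a ∈ Icc 0 t) (hb : b ∈ Icc 0 t) :
      IntervalIntegrable (fun τ => exp (-γ * (t - τ)) * w τ) volume a b :=
    (hw.mono (uIcc_subset_Icc ha hb)).intervalIntegrable_exp_mul
  have hcont : Continuous fun τ => exp (-γ * (t - τ)) := by fun_prop
  have h0 : (0 : ℝ) ∈ Icc 0 t := ⟨le_rfl, ht⟩
  have hmid : t / 2 ∈ Icc 0 t := ⟨by linarith, by linarith⟩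
  have htt : t ∈ Icc 0 t := ⟨ht, le_rfl⟩
  rw [← integral_add_adjacent_intervals (hint h0 hmid) (hint hmid htt)]
  gcongr ?_ + ?_
  · calc ∫ τ in 0..t / 2, exp (-γ * (t - τ)) * w τ
        ≤ ∫ τ in 0..t / 2, exp (-(γ / 2) * t) * w 0 :=
          integral_mono_on (by linarith) (hint h0 hmid) intervalIntegrable_const fun τ hτ =>
            mul_le_mul (exp_le_exp.2 (by nlinarith [hτ.2])) (hw h0 ⟨hτ.1, by linarith [hτ.2]⟩ hτ.1)
              (hw0 τ ⟨hτ.1, by linarith [hτ.2]⟩) (exp_pos _).le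
      _ = t / 2 * exp (-(γ / 2) * t) * w 0 := by
          rw [intervalIntegral.integral_const_mul, intervalIntegral.integral_const, sub_zero,
            smul_eq_mul]
          ring
  · calc ∫ τ in (t / 2)..t, exp (-γ * (t - τ)) * w τ
        ≤ ∫ τ in (t / 2)..t, exp (-γ * (t - τ)) * w (t / 2) :=
          integral_mono_on (by linarith) (hint hmid htt)
            ((hcont.mul continuous_const).intervalIntegrable _ _)
            fun τ hτ => mul_le_mul_of_nonneg_left (hw hmid ⟨by linarith [hτ.1], hτ.2⟩ hτ.1)
              (exp_pos _).le
      _ = (∫ τ in (t / 2)..t, exp (-γ * (t - τ))) * w (t / 2) := integral_mul_const _ _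
      _ ≤ γ⁻¹ * w (t / 2) := by gcongr; exacts [hw0 _ hmid, integral_exp_neg_mul_sub_le hγ t]

theorem isBigO_integral_exp_neg_mul {w : ℝ → ℝ} {γ : ℝ} (hγ : 0 < γ) (hw : AntitoneOn w (Ici 0))
    (hw0 : ∀ t, 0 ≤ t → 0 ≤ w t) (hhalf : (fun t => w (t / 2)) =O[atTop] w)
    (hexp : (fun t => t * exp (-(γ / 2) * t)) =O[atTop] w) :
    (fun t => ∫ τ in 0..t, exp (-γ * (t - τ)) * w τ) =O[atTop] w := by
  have hbound : (fun t => t / 2 * exp (-(γ / 2) * t) * w 0 + γ⁻¹ * w (t / 2)) =O[atTop] w :=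
    ((hexp.const_mul_left (w 0 / 2)).congr_left fun t => by ring).add (hhalf.const_mul_left γ⁻¹)
  refine IsBigO.trans (IsBigO.of_bound 1 ?_) hbound
  filter_upwards [eventually_ge_atTop 0] with t ht
  rw [one_mul, norm_of_nonneg
    (integral_nonneg ht fun τ hτ => mul_nonneg (exp_pos _).le (hw0 τ hτ.1))]
  exact (integral_exp_neg_mul_le hγ ht (hw.mono Icc_subset_Ici_self) (hw0 t ht)).trans
    (le_norm_self _)

end ConvolutionWithExponential

section BanachAlgebra

open NormedSpace Filter

theorem exists_norm_pow_lt_one_of_spectralRadius_lt_one {𝔸 : Type*} [NormedRing 𝔸]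
    [NormedAlgebra ℂ 𝔸] [CompleteSpace 𝔸] {a : 𝔸} (h : spectralRadius ℂ a < 1) :
    ∃ k : ℕ, 0 < k ∧ ‖a ^ k‖ < 1 := by
  obtain ⟨k, hk, hk0⟩ :=
    (((spectrum.pow_norm_pow_one_div_tendsto_nhds_spectralRadius a).eventually_lt_const h).and
      (eventually_gt_atTop 0)).exists
  refine ⟨k, hk0, ?_⟩
  by_contra! h1
  exact (ENNReal.ofReal_lt_one.mp hk).not_ge (Real.one_le_rpow h1 (by positivity))

theorem pow_floor_div_le {q : ℝ} (hq0 : 0 < q) (hq1 : q < 1) (T s : ℝ) :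
    q ^ ⌊s / T⌋₊ ≤ q⁻¹ * Real.exp (Real.log q / T * s) := by
  have hpow : q ^ ⌊s / T⌋₊ = Real.exp (⌊s / T⌋₊ * Real.log q) := by
    rw [Real.exp_nat_mul, Real.exp_log hq0]
  have hexp : q⁻¹ * Real.exp (Real.log q / T * s) = Real.exp (Real.log q * (s / T - 1)) := by
    rw [mul_sub, mul_one, Real.exp_sub, Real.exp_log hq0]
    ring_nf
  rw [hpow, hexp, Real.exp_le_exp, mul_comm]
  exact mul_le_mul_of_nonpos_left (by linarith [Nat.lt_floor_add_one (s / T)])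
    (Real.log_neg hq0 hq1).le

theorem exists_norm_exp_neg_smul_le_of_norm_lt_one {𝔸 : Type*} [NormedRing 𝔸]
    [NormedAlgebra ℚ 𝔸] [NormedAlgebra ℝ 𝔸] [CompleteSpace 𝔸] {a : 𝔸} {T : ℝ} (hT : 0 < T)
    (h : ‖exp ((-T) • a)‖ < 1) :
    ∃ C γ : ℝ, 0 < C ∧ 0 < γ ∧ ∀ s : ℝ, 0 ≤ s → ‖exp ((-s) • a)‖ ≤ C * Real.exp (-γ * s) := by
  set q := max ‖exp ((-T) • a)‖ (1 / 2)
  have hq0 : 0 < q := lt_max_of_lt_right one_half_pos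
  have hq1 : q < 1 := max_lt h one_half_lt_one
  obtain ⟨M, hM⟩ := isCompact_Icc.exists_bound_of_continuousOn
    (exp_continuous.comp (continuous_neg.smul continuous_const)).continuousOn
    (f := fun r : ℝ => exp ((-r) • a)) (s := Set.Icc 0 T)
  have hstep (j : ℕ) : ∀ r ∈ Set.Icc 0 T, ‖exp ((-(j * T + r)) • a)‖ ≤ q ^ j * M := by
    induction j with
    | zero => simpa using hM
    | succ j ih =>
      intro r hr
      have hsplit :
          exp ((-((j + 1 : ℕ) * T + r)) • a) = exp ((-T) • a) * exp ((-(j * T + r)) • a) := by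
        rw [← exp_add_of_commute (((Commute.refl a).smul_left _).smul_right _), ← add_smul]
        push_cast
        ring_nf
      calc ‖exp ((-((j + 1 : ℕ) * T + r)) • a)‖
          ≤ ‖exp ((-T) • a)‖ * ‖exp ((-(j * T + r)) • a)‖ := hsplit ▸ norm_mul_le _ _
        _ ≤ q * (q ^ j * M) := mul_le_mul (le_max_left _ _) (ih r hr) (norm_nonneg _) hq0.le
        _ = q ^ (j + 1) * M := by ring
  have hlogq : Real.log q < 0 := Real.log_neg hq0 hq1
  refine ⟨max M 1 / q, -Real.log q / T, by positivity, div_pos (neg_pos.2 hlogq) hT,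
    fun s hs => ?_⟩
  set j := ⌊s / T⌋₊
  have hjs : j * T ≤ s := (le_div_iff₀ hT).1 (Nat.floor_le (div_nonneg hs hT.le))
  have hsj : s < (j + 1) * T := (div_lt_iff₀ hT).1 (Nat.lt_floor_add_one _)
  calc ‖exp ((-s) • a)‖ = ‖exp ((-(j * T + (s - j * T))) • a)‖ := by ring_nf
    _ ≤ q ^ j * M := hstep j _ ⟨by linarith, by linarith⟩
    _ ≤ q⁻¹ * Real.exp (Real.log q / T * s) * max M 1 :=
      mul_le_mul (pow_floor_div_le hq0 hq1 T s) (le_max_left _ _)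
        ((norm_nonneg _).trans (hM 0 ⟨le_rfl, hT.le⟩)) (by positivity)
    _ = max M 1 / q * Real.exp (-(-Real.log q / T) * s) := by rw [neg_div, neg_neg]; ring

end BanachAlgebra

namespace Matrix

open NormedSpace

variable {ι : Type*} [Fintype ι] [DecidableEq ι]

theorem exp_mulVec_of_mulVec_eq_smul {A : Matrix ι ι ℂ} {v : ι → ℂ} {μ : ℂ}
    (h : A *ᵥ v = μ • v) : exp A *ᵥ v = Complex.exp μ • v := by
  let φ : Matrix ι ι ℂ →L[ℂ] ι → ℂ :=
    LinearMap.toContinuousLinearMap (LinearMap.applyₗ v ∘ₗ Matrix.toLin'.toLinearMap)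
  have hpow (k : ℕ) : A ^ k *ᵥ v = μ ^ k • v := by
    induction k with
    | zero => simp
    | succ k ih => rw [pow_succ, ← mulVec_mulVec, h, mulVec_smul, ih, smul_smul, ← pow_succ']
  have hA := (exp_series_hasSum_exp' (𝕂 := ℂ) A).mapL φ
  have hμ := (exp_series_hasSum_exp' (𝕂 := ℂ) μ).smul_const v
  simp only [φ, LinearMap.coe_toContinuousLinearMap', LinearMap.coe_comp, Function.comp_apply,
    LinearEquiv.coe_coe, toLin'_apply, LinearMap.applyₗ_apply_apply, smul_mulVec, hpow,
    smul_smul] at hA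
  rw [Complex.exp_eq_exp_ℂ]
  exact hA.unique (by simpa [smul_eq_mul] using hμ)

theorem spectrum_exp_subset (A : Matrix ι ι ℂ) :
    spectrum ℂ (exp A) ⊆ Complex.exp '' spectrum ℂ A := by
  intro z hz
  -- the `z`-eigenspace of `exp A` is `A`-invariant, so it contains an eigenvector of `A`
  rw [← spectrum_toLin', ← Module.End.hasEigenvalue_iff_mem_spectrum] at hz
  have hmaps : Set.MapsTo (toLin' A) (Module.End.eigenspace (toLin' (exp A)) z)
      (Module.End.eigenspace (toLin' (exp A)) z) :=
    Module.End.mapsTo_genEigenspace_of_comm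
      ((Commute.refl A).exp_left.map toLinAlgEquiv') z 1
  have : Nontrivial (Module.End.eigenspace (toLin' (exp A)) z) :=
    Submodule.nontrivial_iff_ne_bot.mpr hz
  obtain ⟨μ, hμ⟩ := Module.End.exists_eigenvalue ((toLin' A).restrict hmaps)
  obtain ⟨⟨w, hwz⟩, hwμ, hw0⟩ := hμ.exists_hasEigenvector
  have hAw : A *ᵥ w = μ • w := by
    rw [Module.End.mem_eigenspace_iff, Subtype.ext_iff] at hwμ
    exact hwμ
  have hw0' : w ≠ 0 := fun h => hw0 (by simp [h])
  refine ⟨μ, ?_, ?_⟩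
  · rw [← spectrum_toLin', ← Module.End.hasEigenvalue_iff_mem_spectrum]
    exact Module.End.hasEigenvalue_of_hasEigenvector
      ⟨Module.End.mem_eigenspace_iff.mpr (by simpa using hAw), hw0'⟩
  · have hzw : exp A *ᵥ w = z • w := by simpa using Module.End.mem_eigenspace_iff.mp hwz
    exact smul_left_injective ℂ hw0' ((exp_mulVec_of_mulVec_eq_smul hAw).symm.trans hzw)

theorem spectralRadius_exp_neg_lt_one {A : Matrix ι ι ℂ} (hA : ∀ μ ∈ spectrum ℂ A, 0 < μ.re) :
    spectralRadius ℂ (exp (-A)) < 1 := by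
  rcases (spectrum ℂ (exp (-A))).eq_empty_or_nonempty with h | h
  · simp [spectralRadius, h]
  obtain ⟨z, hz, hzr⟩ := spectrum.exists_nnnorm_eq_spectralRadius_of_nonempty h
  obtain ⟨μ, hμ, rfl⟩ := spectrum_exp_subset (-A) hz
  rw [← spectrum.neg_eq] at hμ
  rw [← hzr, ENNReal.coe_lt_one_iff, ← NNReal.coe_lt_one, coe_nnnorm, Complex.norm_exp,
    Real.exp_lt_one_iff, ← neg_pos, ← Complex.neg_re]
  exact hA (-μ) hμ

theorem exists_norm_exp_neg_smul_le {A : Matrix ι ι ℂ} (hA : ∀ μ ∈ spectrum ℂ A, 0 < μ.re) :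
    ∃ C γ : ℝ, 0 < C ∧ 0 < γ ∧ ∀ s : ℝ, 0 ≤ s → ‖exp ((-s) • A)‖ ≤ C * Real.exp (-γ * s) := by
  obtain ⟨k, hk, hnorm⟩ := exists_norm_pow_lt_one_of_spectralRadius_lt_one (a := exp (-A))
    (spectralRadius_exp_neg_lt_one hA)
  refine exists_norm_exp_neg_smul_le_of_norm_lt_one (a := A) (T := k) (Nat.cast_pos.2 hk) ?_
  rwa [neg_smul, ← smul_neg, Nat.cast_smul_eq_nsmul, NormedSpace.exp_nsmul]

theorem norm_integral_exp_mulVec_le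
    {A : Matrix ι ι ℂ} {g : ℝ → ι → ℂ} {w : ℝ → ℝ} {C₀ C γ t : ℝ} (ht : 0 ≤ t)
    (hdecay : ∀ s : ℝ, 0 ≤ s → ‖exp ((-s) • A)‖ ≤ C₀ * Real.exp (-γ * s))
    (hg : ∀ τ ≥ 0, ‖g τ‖ ≤ C * w τ)
    (hw : IntervalIntegrable (fun τ => Real.exp (-γ * (t - τ)) * w τ) MeasureTheory.volume 0 t) :
    ‖∫ τ in 0..t, exp ((-(t - τ)) • A) *ᵥ g τ‖
      ≤ C₀ * C * ∫ τ in 0..t, Real.exp (-γ * (t - τ)) * w τ := by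
  rw [← intervalIntegral.integral_const_mul]
  refine intervalIntegral.norm_integral_le_of_norm_le ht
    (MeasureTheory.ae_of_all _ fun τ hτ => ?_) (hw.const_mul _)
  have hgτ := hg τ hτ.1.le
  calc ‖exp ((-(t - τ)) • A) *ᵥ g τ‖ ≤ ‖exp ((-(t - τ)) • A)‖ * ‖g τ‖ := linfty_opNorm_mulVec _ _
    _ ≤ ‖exp ((-(t - τ)) • A)‖ * (C * w τ) := mul_le_mul_of_nonneg_left hgτ (norm_nonneg _)
    _ ≤ C₀ * Real.exp (-γ * (t - τ)) * (C * w τ) :=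
        mul_le_mul_of_nonneg_right (hdecay _ (by linarith [hτ.2])) ((norm_nonneg _).trans hgτ)
    _ = C₀ * C * (Real.exp (-γ * (t - τ)) * w τ) := by ring

end Matrix

open Filter Asymptotics Set

theorem stmt11_general (n : ℕ) (A : Matrix (Fin n) (Fin n) ℂ)
    (hA : ∀ μ ∈ spectrum ℂ A, 0 < μ.re)
    (m : ℕ) (α : ℝ) (hα : 0 < α) (Tstar : ℝ) (hT : Em m 0 < Tstar)
    (g : ℝ → Fin n → ℂ)
    (C : ℝ) (hb : ∀ t ≥ (0:ℝ), ‖g t‖ ≤ C * Lm m (Tstar + t) ^ (-α)) :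
    ∃ C' T' : ℝ, ∀ t ≥ T',
      ‖∫ τ in (0:ℝ)..t, (NormedSpace.exp ((-(t - τ)) • A)).mulVec (g τ)‖
        ≤ C' * Lm m (Tstar + t) ^ (-α) := by
  obtain ⟨C₀, γ, hC₀, hγ, hdecay⟩ := Matrix.exists_norm_exp_neg_smul_le hA
  set w : ℝ → ℝ := fun τ => Lm m (Tstar + τ) ^ (-α)
  have hw : AntitoneOn w (Ici 0) := antitoneOn_Lm_rpow_neg hα.le hT
  have hwpos (τ : ℝ) (hτ : 0 ≤ τ) : 0 < w τ := Real.rpow_pos_of_pos (Lm_pos (by linarith)) _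
  have hC : 0 ≤ C :=
    nonneg_of_mul_nonneg_left ((norm_nonneg _).trans (hb 0 le_rfl)) (hwpos 0 le_rfl)
  have hconv : (fun t => ∫ τ in 0..t, Real.exp (-γ * (t - τ)) * w τ) =O[atTop] w :=
    isBigO_integral_exp_neg_mul hγ hw (fun t ht => (hwpos t ht).le)
      (isBigO_Lm_rpow_neg_half hα.le ((Em_zero_nonneg m).trans hT.le))
      (isBigO_mul_exp_neg_Lm_rpow_neg hα.le (half_pos hγ))
  have hsol : (fun t => ∫ τ in (0 : ℝ)..t, (NormedSpace.exp ((-(t - τ)) • A)).mulVec (g τ))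
      =O[atTop] fun t => ∫ τ in 0..t, Real.exp (-γ * (t - τ)) * w τ := by
    refine IsBigO.of_bound (C₀ * C) ?_
    filter_upwards [eventually_ge_atTop 0] with t ht
    exact (Matrix.norm_integral_exp_mulVec_le ht hdecay hb
      ((hw.mono (uIcc_of_le ht ▸ Icc_subset_Ici_self)).intervalIntegrable_exp_mul)).trans
      (mul_le_mul_of_nonneg_left (Real.le_norm_self _) (by positivity))
  obtain ⟨c, hc⟩ := (hsol.trans hconv).bound
  obtain ⟨T', hT'⟩ := eventually_atTop.1 (hc.and (eventually_ge_atTop 0))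
  exact ⟨c, T', fun t ht => (hT' t ht).1.trans_eq
    (by rw [Real.norm_of_nonneg (hwpos t (hT' t ht).2).le])⟩

/-- If all eigenvalues of A have positive real part and |g(t)| ≤ C L_m(T*+t)^{-α},
then |∫₀ᵗ e^{-(t-τ)A} g(τ) dτ| = O(L_m(T*+t)^{-α}) as t → ∞. -/
theorem stmt11 (n : ℕ) (A : Matrix (Fin n) (Fin n) ℂ)
    (hA : ∀ μ ∈ spectrum ℂ A, 0 < μ.re)
    (m : ℕ) (α : ℝ) (hα : 0 < α) (Tstar : ℝ) (hT : Em m 0 < Tstar)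
    (g : ℝ → Fin n → ℂ) (hg : Continuous g)
    (C : ℝ) (hb : ∀ t ≥ (0:ℝ), ‖g t‖ ≤ C * Lm m (Tstar + t) ^ (-α)) :
    ∃ C' T' : ℝ, ∀ t ≥ T',
      ‖∫ τ in (0:ℝ)..t, (NormedSpace.exp ((-(t - τ)) • A)).mulVec (g τ)‖
        ≤ C' * Lm m (Tstar + t) ^ (-α) :=
  stmt11_general n A hA m α hα Tstar hT g C hb
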